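/- arXiv:1204.4549 — 2 statements merged into one kernel-verified Lean document; each statement's English description precedes it below -/
import Mathlib

section
/- Let n ≥ 1. Let H(q,p) = (1/2)|p|² − 1/|q| and K(q,p) = (1/2)(|p|² + 1)|q|, both viewed as smooth functions on the open set (ℝⁿ \ {0}) × ℝⁿ. If (q,p) satisfies q ≠ 0 and H(q,p) = −1/2, then the Fréchet derivatives satisfy D K(q,p) = |q| · D H(q,p) (as continuous linear functionals on ℝⁿ × ℝⁿ). In particular the Hamiltonian vector field of K on the energy hypersurface H = −1/2 is |q| times that of H. -/
/-- The Kepler Hamiltonian `H(q,p) = (1/2)|p|² − 1/|q|` as a function on `ℝⁿ × ℝⁿ`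
(defined away from `q = 0`). -/
noncomputable def keplerH (n : ℕ)
    (x : EuclideanSpace ℝ (Fin n) × EuclideanSpace ℝ (Fin n)) : ℝ :=
  (1 / 2) * ‖x.2‖ ^ 2 - 1 / ‖x.1‖

/-- The regularized Hamiltonian `K(q,p) = (1/2)(|p|² + 1)|q|`. -/
noncomputable def moserK (n : ℕ)
    (x : EuclideanSpace ℝ (Fin n) × EuclideanSpace ℝ (Fin n)) : ℝ :=
  (1 / 2) * (‖x.2‖ ^ 2 + 1) * ‖x.1‖

/-- On the energy hypersurface `H = −1/2`, the Fréchet derivative of the regularized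
Hamiltonian `K` is `|q|` times that of the Kepler Hamiltonian `H`; in particular the
Hamiltonian vector field of `K` there is `|q|` times that of `H`. -/
theorem fderiv_moserK_eq_norm_smul_fderiv_keplerH (n : ℕ) (hn : 1 ≤ n)
    (q p : EuclideanSpace ℝ (Fin n)) (hq : q ≠ 0)
    (hH : keplerH n (q, p) = -(1 / 2)) :
    fderiv ℝ (moserK n) (q, p) = ‖q‖ • fderiv ℝ (keplerH n) (q, p) := by
  have hq' : ‖q‖ ≠ 0 := norm_ne_zero_iff.mpr hq
  -- derivative of x ↦ ‖x.1‖
  have h1 : HasFDerivAt (fun x : EuclideanSpace ℝ (Fin n) × EuclideanSpace ℝ (Fin n) => ‖x.1‖)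
      (fderiv ℝ (fun x : EuclideanSpace ℝ (Fin n) × EuclideanSpace ℝ (Fin n) => ‖x.1‖) (q, p))
      (q, p) :=
    (DifferentiableAt.norm ℝ differentiableAt_fst hq).hasFDerivAt
  set N := fderiv ℝ (fun x : EuclideanSpace ℝ (Fin n) × EuclideanSpace ℝ (Fin n) => ‖x.1‖) (q, p)
    with hN
  -- derivative of x ↦ ‖x.2‖ ^ 2
  have h2 : HasFDerivAt
      (fun x : EuclideanSpace ℝ (Fin n) × EuclideanSpace ℝ (Fin n) => ‖x.2‖ ^ 2)
      (fderiv ℝ (fun x : EuclideanSpace ℝ (Fin n) × EuclideanSpace ℝ (Fin n) => ‖x.2‖ ^ 2) (q, p))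
      (q, p) :=
    (DifferentiableAt.norm_sq ℝ differentiableAt_snd).hasFDerivAt
  set P := fderiv ℝ (fun x : EuclideanSpace ℝ (Fin n) × EuclideanSpace ℝ (Fin n) => ‖x.2‖ ^ 2)
    (q, p) with hP
  -- derivative of x ↦ ‖x.1‖⁻¹
  have hinv : HasFDerivAt
      (fun x : EuclideanSpace ℝ (Fin n) × EuclideanSpace ℝ (Fin n) => (‖x.1‖)⁻¹)
      ((ContinuousLinearMap.smulRight (1 : ℝ →L[ℝ] ℝ) (-(‖q‖ ^ 2)⁻¹)).comp N) (q, p) :=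
    (hasFDerivAt_inv hq').comp (q, p) h1
  -- derivative of K
  have hK : HasFDerivAt (moserK n)
      (((1 / 2) * (‖p‖ ^ 2 + 1)) • N + ‖q‖ • ((1 / 2 : ℝ) • P)) (q, p) := by
    exact ((h2.add_const 1).const_mul (1 / 2 : ℝ)).mul h1
  -- derivative of H
  have hHd : HasFDerivAt (keplerH n)
      ((1 / 2 : ℝ) • P - (ContinuousLinearMap.smulRight (1 : ℝ →L[ℝ] ℝ) (-(‖q‖ ^ 2)⁻¹)).comp N)
      (q, p) := by
    have h := (h2.const_mul (1 / 2 : ℝ)).sub hinv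
    have heq : keplerH n = fun x : EuclideanSpace ℝ (Fin n) × EuclideanSpace ℝ (Fin n) =>
        (1 / 2) * ‖x.2‖ ^ 2 - (‖x.1‖)⁻¹ := by
      funext x; simp [keplerH, one_div]
    rw [heq]
    exact h
  rw [hK.fderiv, hHd.fderiv]
  -- the energy constraint
  have hp2 : ‖p‖ ^ 2 = 2 / ‖q‖ - 1 := by
    have : (1 / 2) * ‖p‖ ^ 2 - 1 / ‖q‖ = -(1 / 2) := hH
    field_simp at this ⊢
    linarith
  refine ContinuousLinearMap.ext fun v => ?_
  simp only [ContinuousLinearMap.add_apply, ContinuousLinearMap.coe_smul', Pi.smul_apply,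
    ContinuousLinearMap.coe_sub', Pi.sub_apply, ContinuousLinearMap.coe_comp', Function.comp_apply,
    ContinuousLinearMap.smulRight_apply, ContinuousLinearMap.one_apply, smul_eq_mul, hp2]
  field_simp
  ring
end

section
/- Let E be a real inner product space and v ∈ E a unit vector. Define F : E → E by F(w) = (‖w‖² + 4)⁻¹ • (4w + (‖w‖² − 4)v) (the inverse of stereographic projection from the pole v, taking values in the unit sphere). Then F is conformal on the hyperplane orthogonal to v: for every w orthogonal to v and every u orthogonal to v, the Fréchet derivative satisfies ‖DF(w)(u)‖ = (4/(‖w‖² + 4)) ‖u‖. -/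
/-!
Differentiating the quotient gives, with `N = ‖w‖² + 4`,
`DF(w) u = (4 / N) • (u - (2 ⟪w, u⟫ / N) • (w - 2v))`.
When `w, u ⊥ v` and `‖v‖ = 1` we have `‖w - 2v‖² = N` and `⟪w - 2v, u⟫ = ⟪w, u⟫`, so the vector in
parentheses is the reflection of `u` in the hyperplane orthogonal to `w - 2v`, which has norm `‖u‖`.
-/

open scoped RealInnerProductSpace

/-- The inverse of stereographic projection from the pole `v`:
`F(w) = (‖w‖² + 4)⁻¹ • (4w + (‖w‖² − 4)v)`, mapping the hyperplane orthogonal to `v`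
to the unit sphere. -/
noncomputable def stereoInv {E : Type*} [NormedAddCommGroup E]
    [InnerProductSpace ℝ E] (v : E) (w : E) : E :=
  (‖w‖ ^ 2 + 4)⁻¹ • ((4 : ℝ) • w + (‖w‖ ^ 2 - 4) • v)

section

variable {E : Type*} [NormedAddCommGroup E] [InnerProductSpace ℝ E]

open Submodule in
theorem norm_sub_two_mul_inner_div_smul (x u : E) :
    ‖u - (2 * ⟪x, u⟫ / ‖x‖ ^ 2) • x‖ = ‖u‖ := by
  rw [← (reflection (ℝ ∙ x)ᗮ).norm_map u, reflection_orthogonal_apply,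
    reflection_singleton_apply, neg_sub]
  congr 1
  simp only [RCLike.ofReal_real_eq_id, id]
  module

theorem fderiv_stereoInv_apply (v w u : E) :
    fderiv ℝ (stereoInv v) w u =
      (4 / (‖w‖ ^ 2 + 4)) • (u - (2 * ⟪w, u⟫ / (‖w‖ ^ 2 + 4)) • (w - (2 : ℝ) • v)) := by
  have hN : ‖w‖ ^ 2 + 4 ≠ 0 := by positivity
  have hnormSq : HasFDerivAt (fun x : E => ‖x‖ ^ 2) (2 • innerSL ℝ w) w := by
    simpa using (hasFDerivAt_id w).norm_sq
  have hfactor : HasFDerivAt (fun x : E => (‖x‖ ^ 2 + 4)⁻¹)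
      (-((‖w‖ ^ 2 + 4) ^ 2)⁻¹ • 2 • innerSL ℝ w) w := by
    simpa [Function.comp_def] using
      (hasDerivAt_inv hN).comp_hasFDerivAt w (hnormSq.add_const 4)
  have hnumer : HasFDerivAt (fun x : E => (4 : ℝ) • x + (‖x‖ ^ 2 - 4) • v)
      ((4 : ℝ) • ContinuousLinearMap.id ℝ E + (2 • innerSL ℝ w).smulRight v) w :=
    ((hasFDerivAt_id w).const_smul (4 : ℝ)).add ((hnormSq.sub_const 4).smul_const v)
  rw [HasFDerivAt.fderiv (f := stereoInv v) (hfactor.smul hnumer)]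
  simp only [smul_add, neg_smul, add_apply, smul_apply, ContinuousLinearMap.id_apply,
    ContinuousLinearMap.smulRight_apply, coe_innerSL_apply, nsmul_eq_mul, Nat.cast_ofNat,
    neg_apply, smul_eq_mul]
  match_scalars <;> field_simp
  ring

end

/-- The inverse of stereographic projection is conformal on the hyperplane orthogonal
to the pole: for `w ⊥ v` and `u ⊥ v` its Fréchet derivative satisfies
`‖DF(w)(u)‖ = (4/(‖w‖² + 4))‖u‖`. This conformal factor expresses the round metric of
the sphere in the stereographic chart. -/
theorem stereoInv_conformal {E : Type*} [NormedAddCommGroup E]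
    [InnerProductSpace ℝ E] (v : E) (hv : ‖v‖ = 1) (w u : E)
    (hw : ⟪w, v⟫ = 0) (hu : ⟪u, v⟫ = 0) :
    ‖fderiv ℝ (stereoInv v) w u‖ = (4 / (‖w‖ ^ 2 + 4)) * ‖u‖ := by
  have hnorm : ‖w - (2 : ℝ) • v‖ ^ 2 = ‖w‖ ^ 2 + 4 := by
    rw [norm_sub_sq_real, inner_smul_right, norm_smul, hw, hv]
    norm_num
  have hinner : ⟪w - (2 : ℝ) • v, u⟫ = ⟪w, u⟫ := by
    rw [inner_sub_left, real_inner_smul_left, real_inner_comm u v, hu, mul_zero, sub_zero]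
  have hreflect := norm_sub_two_mul_inner_div_smul (w - (2 : ℝ) • v) u
  rw [hnorm, hinner] at hreflect
  rw [fderiv_stereoInv_apply, norm_smul, hreflect, Real.norm_of_nonneg (by positivity)]
end
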